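/- arXiv:0707.1660 — 3 statements merged into one kernel-verified Lean document; each statement's English description precedes it below -/
import Mathlib

section
/- For all nonnegative integers n and all integers k, one has C_μ(2n, k-1) + C_μ(2n, k) = C_μ(2n+1, k) (μ-deformed Pascal identity for even upper index). -/
open Finset

/-- The μ-deformed factorial function γ_μ. -/
noncomputable def gammaMu (μ : ℝ) : ℕ → ℝ
  | 0 => 1
  | n + 1 => ((n + 1 : ℝ) + 2 * μ * (if Odd (n + 1) then 1 else 0)) * gammaMu μ n

/-- The μ-deformed binomial coefficient C_μ(n,k), zero outside 0 ≤ k ≤ n. -/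
noncomputable def binomMu (μ : ℝ) (n : ℕ) (k : ℤ) : ℝ :=
  if 0 ≤ k ∧ k ≤ (n : ℤ) then gammaMu μ n / (gammaMu μ (n - k.toNat) * gammaMu μ k.toNat) else 0

/-- The n-th μ-deformed binomial polynomial p_{n,μ}(x,y). -/
noncomputable def pMu (μ : ℝ) (n : ℕ) (x y : ℂ) : ℂ :=
  ∑ k ∈ Finset.range (n + 1), (binomMu μ n k : ℂ) * x ^ k * y ^ (n - k)

/-- The μ-deformed exponential function. -/
noncomputable def expMu (μ : ℝ) (z : ℂ) : ℂ :=
  ∑' n : ℕ, z ^ n / (gammaMu μ n : ℂ)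

/-- The Bessel function of the first kind of order ν, for positive real argument. -/
noncomputable def besselJ (ν x : ℝ) : ℝ :=
  ∑' m : ℕ, ((-1) ^ m / (Nat.factorial m * Real.Gamma (ν + m + 1))) * (x / 2) ^ ((2 * m : ℝ) + ν)

/-!
Write `γ_μ(m + 1) = [m + 1]_μ · γ_μ(m)` with the deformed integer `[m]_μ = m + 2μ·θ(m)`, which is
positive for `m ≥ 1` since `μ > -1/2`. For `1 ≤ k ≤ 2n`, put `j = k - 1` and `r = 2n - k`; clearing
the denominators reduces the identity to `[j + 1]_μ + [r + 1]_μ = [2n + 1]_μ`. This holds because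
`j + r + 1 = 2n` is even: exactly one of `j + 1`, `r + 1` is odd, and so is `2n + 1`, so both sides
carry the deformation `2μ` exactly once. For other `k` both sides are `0` or `1`.
-/

noncomputable def muInt (μ : ℝ) (m : ℕ) : ℝ :=
  m + 2 * μ * (if Odd m then 1 else 0)

lemma gammaMu_zero (μ : ℝ) : gammaMu μ 0 = 1 := rfl

lemma gammaMu_succ (μ : ℝ) (m : ℕ) : gammaMu μ (m + 1) = muInt μ (m + 1) * gammaMu μ m := by
  simp only [gammaMu, muInt]; push_cast; ring

lemma muInt_pos {μ : ℝ} (hμ : -(1 / 2 : ℝ) < μ) {m : ℕ} (hm : 0 < m) : 0 < muInt μ m := by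
  have hm' : (1 : ℝ) ≤ m := by exact_mod_cast hm
  unfold muInt
  split_ifs <;> linarith

lemma muInt_add_muInt_of_odd_add (μ : ℝ) {a b : ℕ} (hab : Odd (a + b)) :
    muInt μ a + muInt μ b = (a + b : ℕ) + 2 * μ := by
  by_cases ha : Odd a
  · have hb : ¬ Odd b := Nat.not_odd_iff_even.mpr ((Nat.odd_add.mp hab).mp ha)
    simp only [muInt, if_pos ha, if_neg hb]; push_cast; ring
  · have hb : Odd b := (Nat.odd_add'.mp hab).mpr (Nat.not_odd_iff_even.mp ha)
    simp only [muInt, if_neg ha, if_pos hb]; push_cast; ring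

lemma gammaMu_pos {μ : ℝ} (hμ : -(1 / 2 : ℝ) < μ) (m : ℕ) : 0 < gammaMu μ m := by
  induction m with
  | zero => exact one_pos
  | succ m ih => rw [gammaMu_succ]; exact mul_pos (muInt_pos hμ m.succ_pos) ih

lemma binomMu_of_le (μ : ℝ) {n k : ℕ} (hk : k ≤ n) :
    binomMu μ n k = gammaMu μ n / (gammaMu μ (n - k) * gammaMu μ k) := by
  rw [binomMu, if_pos ⟨k.cast_nonneg, by exact_mod_cast hk⟩, Int.toNat_natCast]

lemma binomMu_of_neg (μ : ℝ) (n : ℕ) {k : ℤ} (hk : k < 0) : binomMu μ n k = 0 :=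
  if_neg fun h => hk.not_ge h.1

lemma binomMu_of_lt (μ : ℝ) {n : ℕ} {k : ℤ} (hk : (n : ℤ) < k) : binomMu μ n k = 0 :=
  if_neg fun h => hk.not_ge h.2

lemma binomMu_zero_right {μ : ℝ} (hμ : -(1 / 2 : ℝ) < μ) (n : ℕ) : binomMu μ n 0 = 1 := by
  rw [← Nat.cast_zero, binomMu_of_le μ n.zero_le, Nat.sub_zero, gammaMu_zero, mul_one,
    div_self (gammaMu_pos hμ n).ne']

lemma binomMu_self {μ : ℝ} (hμ : -(1 / 2 : ℝ) < μ) (n : ℕ) : binomMu μ n n = 1 := by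
  rw [binomMu_of_le μ le_rfl, Nat.sub_self, gammaMu_zero, one_mul,
    div_self (gammaMu_pos hμ n).ne']

lemma gammaMu_pascal {μ : ℝ} (hμ : -(1 / 2 : ℝ) < μ) {j r : ℕ} (h : Even (j + r + 1)) :
    gammaMu μ (j + r + 1) / (gammaMu μ (r + 1) * gammaMu μ j)
      + gammaMu μ (j + r + 1) / (gammaMu μ r * gammaMu μ (j + 1))
      = gammaMu μ (j + r + 2) / (gammaMu μ (r + 1) * gammaMu μ (j + 1)) := by
  have hsum : muInt μ (j + 1) + muInt μ (r + 1) = muInt μ (j + r + 2) := by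
    rw [muInt_add_muInt_of_odd_add μ (by convert h.add_one using 1; ring), muInt,
      if_pos (show Odd (j + r + 2) from h.add_one)]
    push_cast; ring
  have hj := (muInt_pos hμ (show 0 < j + 1 by omega)).ne'
  have hr := (muInt_pos hμ (show 0 < r + 1 by omega)).ne'
  have hγj := (gammaMu_pos hμ j).ne'
  have hγr := (gammaMu_pos hμ r).ne'
  rw [gammaMu_succ μ j, gammaMu_succ μ r, show j + r + 2 = j + r + 1 + 1 by ring,
    gammaMu_succ μ (j + r + 1), ← hsum]
  field_simp

theorem binomMu_pascal_even (μ : ℝ) (hμ : -(1/2 : ℝ) < μ) (n : ℕ) (k : ℤ) :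
    binomMu μ (2 * n) (k - 1) + binomMu μ (2 * n) k = binomMu μ (2 * n + 1) k := by
  rcases lt_or_ge k 0 with hk | hk
  · rw [binomMu_of_neg μ _ hk, binomMu_of_neg μ _ hk, binomMu_of_neg μ _ (by omega), add_zero]
  lift k to ℕ using hk
  rcases k.eq_zero_or_pos with rfl | hk0
  · rw [Nat.cast_zero, binomMu_of_neg μ _ (by omega), binomMu_zero_right hμ,
      binomMu_zero_right hμ, zero_add]
  obtain ⟨j, rfl⟩ : ∃ j, k = j + 1 := ⟨k - 1, by omega⟩
  rw [show ((j + 1 : ℕ) : ℤ) - 1 = j by push_cast; ring]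
  rcases lt_trichotomy j (2 * n) with hlt | rfl | hgt
  · obtain ⟨r, hn⟩ : ∃ r, 2 * n = j + r + 1 := ⟨2 * n - (j + 1), by omega⟩
    rw [binomMu_of_le μ hlt.le, binomMu_of_le μ hlt, binomMu_of_le μ (by omega), hn,
      show j + r + 1 - j = r + 1 by omega, show j + r + 1 - (j + 1) = r by omega,
      show j + r + 1 + 1 - (j + 1) = r + 1 by omega]
    exact gammaMu_pascal hμ (hn ▸ even_two_mul n)
  · rw [binomMu_self hμ, binomMu_of_lt μ (by omega), binomMu_self hμ, add_zero]
  · rw [binomMu_of_lt μ (by omega), binomMu_of_lt μ (by omega), binomMu_of_lt μ (by omega),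
      add_zero]
end

section
/- For every integer n ≥ 1, the alternating sum of the μ-deformed binomial coefficients satisfies p_{2n,μ}(1,-1) = Σ_{k=0}^{2n} (-1)^k C_μ(2n,k) = (2^{2n} μ/(n+μ)) · Π_{k=1}^{n} (k+μ)/(k+2μ). -/
/-! Write (a)_m for the rising and x^{\underline j} for the falling factorial, and a = μ + 1/2.
Then γ_μ(2m) = 4^m m! (a)_m and γ_μ(2m+1) = 2·4^m m! (a)_{m+1}. Since (a)_{i+j} / (a)_i is
x^{\underline j} at x = a + i + j - 1, multiplying the even-index and the odd-index parts of
Σ (-1)^k C_μ(2n,k) by (a)_n turns each of them into a Chu–Vandermonde convolution of falling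
factorials at x. They sum to (2x)^{\underline n} and n (2x)^{\underline{n-1}}, whose difference is
2μ (2x)^{\underline{n-1}}; the duplication formula (2μ+1)_{2n} = 4^n (μ+1/2)_n (μ+1)_n turns
2μ (2x)^{\underline{n-1}} / (a)_n into the stated product. -/

open Finset

open Polynomial
open scoped Nat

section Pochhammer

variable {R : Type*} [CommRing R]

theorem ascPochhammer_eval_eq_prod_range (n : ℕ) (r : R) :
    (ascPochhammer R n).eval r = ∏ j ∈ range n, (r + j) := by
  induction n with
  | zero => simp
  | succ n ih => rw [ascPochhammer_succ_eval, ih, prod_range_succ]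

theorem descPochhammer_succ_eval_left (n : ℕ) (r : R) :
    (descPochhammer R (n + 1)).eval r = r * (descPochhammer R n).eval (r - 1) := by
  rw [descPochhammer_succ_left, eval_mul, eval_X, eval_comp, eval_sub, eval_X, eval_one]

theorem ascPochhammer_eval_add_eq_mul_descPochhammer (a : R) (i j : ℕ) :
    (ascPochhammer R (i + j)).eval a =
      (ascPochhammer R i).eval a * (descPochhammer R j).eval (a + (i + j : ℕ) - 1) := by
  rw [← ascPochhammer_mul, eval_mul, eval_comp, descPochhammer_eval_eq_ascPochhammer]
  congr 2
  simp only [eval_add, eval_X, eval_natCast]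
  push_cast
  ring

theorem descPochhammer_eval_add (x y : R) (n : ℕ) :
    (descPochhammer R n).eval (x + y) = ∑ ij ∈ antidiagonal n,
      n.choose ij.1 * ((descPochhammer R ij.1).eval x * (descPochhammer R ij.2).eval y) := by
  have h (k : ℕ) (r : R) : (descPochhammer ℤ k).smeval r = (descPochhammer R k).eval r := by
    rw [← aeval_eq_smeval, aeval_def, eval₂_eq_eval_map, descPochhammer_map]
  simpa only [h] using Ring.descPochhammer_smeval_add n (Commute.all x y)

end Pochhammer

theorem ascPochhammer_two_mul_eval_two_mul {K : Type*} [Field K] [CharZero K] (b : K) (n : ℕ) :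
    (ascPochhammer K (2 * n)).eval (2 * b) =
      4 ^ n * (ascPochhammer K n).eval b * (ascPochhammer K n).eval (b + 1 / 2) := by
  induction n with
  | zero => simp
  | succ n ih =>
    rw [show 2 * (n + 1) = 2 * n + 1 + 1 by ring, ascPochhammer_succ_eval,
      ascPochhammer_succ_eval, ih, ascPochhammer_succ_eval, ascPochhammer_succ_eval]
    push_cast
    ring

theorem sum_range_two_mul_add_one {M : Type*} [AddCommMonoid M] (f : ℕ → M) (n : ℕ) :
    ∑ k ∈ range (2 * n + 1), f k =
      ∑ i ∈ range (n + 1), f (2 * i) + ∑ i ∈ range n, f (2 * i + 1) := by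
  induction n with
  | zero => simp
  | succ n ih =>
    rw [show 2 * (n + 1) + 1 = 2 * n + 1 + 1 + 1 by ring, sum_range_succ, sum_range_succ, ih,
      sum_range_succ _ (n + 1), sum_range_succ (fun i => f (2 * i + 1)) n,
      show 2 * (n + 1) = 2 * n + 1 + 1 by ring]
    abel

section DeformedBinomial

variable {μ : ℝ}

theorem gammaMu_two_mul_add_one (m : ℕ) :
    gammaMu μ (2 * m + 1) = (2 * m + 1 + 2 * μ) * gammaMu μ (2 * m) := by
  simp [gammaMu]

theorem gammaMu_two_mul_add_two (m : ℕ) :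
    gammaMu μ (2 * m + 2) = (2 * m + 2) * gammaMu μ (2 * m + 1) := by
  have h : ¬Odd (2 * m + 2) := by simp [Nat.odd_iff]
  rw [gammaMu, if_neg h]
  push_cast
  ring

theorem gammaMu_two_mul_eq_ascPochhammer (m : ℕ) :
    gammaMu μ (2 * m) = 4 ^ m * m ! * (ascPochhammer ℝ m).eval (μ + 1 / 2) := by
  induction m with
  | zero => simp [gammaMu]
  | succ m ih =>
    rw [mul_add, mul_one, gammaMu_two_mul_add_two, gammaMu_two_mul_add_one, ih,
      ascPochhammer_succ_eval, Nat.factorial_succ]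
    push_cast
    ring

theorem gammaMu_two_mul_add_one_eq_ascPochhammer (m : ℕ) :
    gammaMu μ (2 * m + 1) = 2 * 4 ^ m * m ! * (ascPochhammer ℝ (m + 1)).eval (μ + 1 / 2) := by
  rw [gammaMu_two_mul_add_one, gammaMu_two_mul_eq_ascPochhammer, ascPochhammer_succ_eval]
  ring

theorem binomMu_natCast {N k : ℕ} (h : k ≤ N) :
    binomMu μ N k = gammaMu μ N / (gammaMu μ (N - k) * gammaMu μ k) := by
  simp [binomMu, h]

theorem pMu_two_mul_one_neg_one (n : ℕ) :
    pMu μ (2 * n) 1 (-1) =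
      ((∑ k ∈ range (2 * n + 1), (-1) ^ k * binomMu μ (2 * n) k : ℝ) : ℂ) := by
  rw [pMu]
  push_cast
  refine sum_congr rfl fun k hk => ?_
  have hk : k ≤ 2 * n := Nat.lt_succ_iff.mp (mem_range.mp hk)
  rw [one_pow, mul_one, neg_one_pow_eq_pow_mod_two, neg_one_pow_eq_pow_mod_two (n := k),
    show (2 * n - k) % 2 = k % 2 by omega, mul_comm]

theorem binomMu_two_mul_even_mul_ascPochhammer (hμ : -(1 / 2 : ℝ) < μ) (i j : ℕ) :
    binomMu μ (2 * (i + j)) (2 * i : ℕ) * (ascPochhammer ℝ (i + j)).eval (μ + 1 / 2) =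
      (i + j).choose i * ((descPochhammer ℝ i).eval (μ + 1 / 2 + (i + j : ℕ) - 1) *
        (descPochhammer ℝ j).eval (μ + 1 / 2 + (i + j : ℕ) - 1)) := by
  have ha : 0 < μ + 1 / 2 := by linarith
  have hi := ascPochhammer_eval_add_eq_mul_descPochhammer (μ + 1 / 2) i j
  have hj := ascPochhammer_eval_add_eq_mul_descPochhammer (μ + 1 / 2) j i
  rw [add_comm j i] at hj
  have hfac : ((i + j).choose i * i ! * j ! : ℝ) = (i + j)! := by
    rw [Nat.choose_symm_add]
    exact_mod_cast Nat.add_choose_mul_factorial_mul_factorial i j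
  have hAi := (ascPochhammer_pos i _ ha).ne'
  have hAj := (ascPochhammer_pos j _ ha).ne'
  rw [binomMu_natCast (by omega), show 2 * (i + j) - 2 * i = 2 * j by omega,
    gammaMu_two_mul_eq_ascPochhammer, gammaMu_two_mul_eq_ascPochhammer,
    gammaMu_two_mul_eq_ascPochhammer, ← hfac, pow_add]
  nth_rewrite 2 [hi]
  rw [hj]
  generalize μ + 1 / 2 = a at *
  field_simp

theorem binomMu_two_mul_odd_mul_ascPochhammer (hμ : -(1 / 2 : ℝ) < μ) (i j : ℕ) :
    binomMu μ (2 * (i + j + 1)) (2 * i + 1 : ℕ) *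
        (ascPochhammer ℝ (i + j + 1)).eval (μ + 1 / 2) =
      (i + j + 1) * ((i + j).choose i *
        ((descPochhammer ℝ i).eval (μ + 1 / 2 + (i + j + 1 : ℕ) - 1) *
          (descPochhammer ℝ j).eval (μ + 1 / 2 + (i + j + 1 : ℕ) - 1))) := by
  have ha : 0 < μ + 1 / 2 := by linarith
  have hi := ascPochhammer_eval_add_eq_mul_descPochhammer (μ + 1 / 2) (i + 1) j
  have hj := ascPochhammer_eval_add_eq_mul_descPochhammer (μ + 1 / 2) (j + 1) i
  rw [show j + 1 + i = i + j + 1 by ring] at hj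
  rw [show i + 1 + j = i + j + 1 by ring] at hi
  have hfac : ((i + j).choose i * i ! * j ! : ℝ) = (i + j)! := by
    rw [Nat.choose_symm_add]
    exact_mod_cast Nat.add_choose_mul_factorial_mul_factorial i j
  have hAi := (ascPochhammer_pos (i + 1) _ ha).ne'
  have hAj := (ascPochhammer_pos (j + 1) _ ha).ne'
  rw [binomMu_natCast (by omega), show 2 * (i + j + 1) - (2 * i + 1) = 2 * j + 1 by omega,
    gammaMu_two_mul_eq_ascPochhammer, gammaMu_two_mul_add_one_eq_ascPochhammer,
    gammaMu_two_mul_add_one_eq_ascPochhammer, Nat.factorial_succ, Nat.cast_mul, ← hfac, pow_succ,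
    pow_add]
  nth_rewrite 2 [hi]
  rw [hj]
  generalize μ + 1 / 2 = a at *
  field_simp
  push_cast
  ring

theorem sum_binomMu_even_mul_ascPochhammer (hμ : -(1 / 2 : ℝ) < μ) (n : ℕ) :
    (∑ i ∈ range (n + 1), binomMu μ (2 * n) (2 * i : ℕ)) *
        (ascPochhammer ℝ n).eval (μ + 1 / 2) =
      (descPochhammer ℝ n).eval (2 * μ + 2 * n - 1) := by
  rw [show 2 * μ + 2 * n - 1 = (μ + 1 / 2 + (n : ℕ) - 1) + (μ + 1 / 2 + (n : ℕ) - 1) by ring,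
    descPochhammer_eval_add, sum_mul, ← Nat.sum_antidiagonal_eq_sum_range_succ
      (fun i _ => binomMu μ (2 * n) (2 * i : ℕ) * (ascPochhammer ℝ n).eval (μ + 1 / 2)) n]
  refine sum_congr rfl fun ⟨i, j⟩ hij => ?_
  rw [HasAntidiagonal.mem_antidiagonal] at hij
  subst hij
  exact binomMu_two_mul_even_mul_ascPochhammer hμ i j

theorem sum_binomMu_odd_mul_ascPochhammer (hμ : -(1 / 2 : ℝ) < μ) (m : ℕ) :
    (∑ i ∈ range (m + 1), binomMu μ (2 * (m + 1)) (2 * i + 1 : ℕ)) *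
        (ascPochhammer ℝ (m + 1)).eval (μ + 1 / 2) =
      (m + 1) * (descPochhammer ℝ m).eval (2 * μ + 2 * m + 1) := by
  rw [show 2 * μ + 2 * m + 1 =
      (μ + 1 / 2 + (m + 1 : ℕ) - 1) + (μ + 1 / 2 + (m + 1 : ℕ) - 1) by push_cast; ring,
    descPochhammer_eval_add, mul_sum, sum_mul, ← Nat.sum_antidiagonal_eq_sum_range_succ
      (fun i _ => binomMu μ (2 * (m + 1)) (2 * i + 1 : ℕ) *
        (ascPochhammer ℝ (m + 1)).eval (μ + 1 / 2)) m]
  refine sum_congr rfl fun ⟨i, j⟩ hij => ?_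
  rw [HasAntidiagonal.mem_antidiagonal] at hij
  subst hij
  rw [binomMu_two_mul_odd_mul_ascPochhammer hμ i j]
  push_cast
  ring

theorem sum_neg_one_pow_mul_binomMu (hμ : -(1 / 2 : ℝ) < μ) (m : ℕ) :
    ∑ k ∈ range (2 * (m + 1) + 1), (-1) ^ k * binomMu μ (2 * (m + 1)) k =
      2 * μ * (descPochhammer ℝ m).eval (2 * μ + 2 * m + 1) /
        (ascPochhammer ℝ (m + 1)).eval (μ + 1 / 2) := by
  have hA := (ascPochhammer_pos (m + 1) _ (by linarith : 0 < μ + 1 / 2)).ne'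
  have heven := sum_binomMu_even_mul_ascPochhammer hμ (m + 1)
  rw [show 2 * μ + 2 * ((m + 1 : ℕ) : ℝ) - 1 = 2 * μ + 2 * m + 1 by push_cast; ring,
    descPochhammer_succ_eval] at heven
  rw [eq_div_iff hA, sum_range_two_mul_add_one]
  simp only [pow_add, pow_one, pow_mul, neg_one_sq, one_pow, one_mul, neg_one_mul,
    sum_neg_distrib, ← sub_eq_add_neg]
  rw [sub_mul, heven, sum_binomMu_odd_mul_ascPochhammer hμ m]
  ring

theorem two_mul_mul_descPochhammer_div_ascPochhammer_eq_prod (hμ : -(1 / 2 : ℝ) < μ) (m : ℕ) :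
    2 * μ * (descPochhammer ℝ m).eval (2 * μ + 2 * m + 1) /
        (ascPochhammer ℝ (m + 1)).eval (μ + 1 / 2) =
      2 ^ (2 * (m + 1)) * μ / (((m + 1 : ℕ) : ℝ) + μ) *
        ∏ k ∈ range (m + 1), (((k : ℝ) + 1) + μ) / (((k : ℝ) + 1) + 2 * μ) := by
  have hA := (ascPochhammer_pos (m + 1) _ (by linarith : 0 < μ + 1 / 2)).ne'
  have hQ := (ascPochhammer_pos (m + 1) _ (by linarith : 0 < 2 * μ + 1)).ne'
  have hm : ((m + 1 : ℕ) : ℝ) + μ ≠ 0 := by push_cast; linarith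
  have hdup := ascPochhammer_two_mul_eval_two_mul (μ + 1 / 2) (m + 1)
  rw [two_mul (m + 1), ascPochhammer_eval_add_eq_mul_descPochhammer,
    descPochhammer_succ_eval_left, show 2 * (μ + 1 / 2) = 2 * μ + 1 by ring] at hdup
  have hprod : ∏ k ∈ range (m + 1), (((k : ℝ) + 1) + μ) / (((k : ℝ) + 1) + 2 * μ) =
      (ascPochhammer ℝ (m + 1)).eval (μ + 1) /
        (ascPochhammer ℝ (m + 1)).eval (2 * μ + 1) := by
    rw [prod_div_distrib, ascPochhammer_eval_eq_prod_range, ascPochhammer_eval_eq_prod_range]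
    congr 1 <;> exact prod_congr rfl fun k _ => by ring
  rw [show 2 * μ + 1 + ((m + 1 + (m + 1) : ℕ) : ℝ) - 1 - 1 = 2 * μ + 2 * m + 1 by
      push_cast; ring,
    show μ + 1 / 2 + 1 / 2 = μ + 1 by ring] at hdup
  rw [hprod, pow_mul, show (2 : ℝ) ^ 2 = 4 by norm_num, div_mul_div_comm,
    div_eq_div_iff hA (mul_ne_zero hm hQ)]
  push_cast at hdup ⊢
  linear_combination μ * hdup

end DeformedBinomial

theorem pMu_alt_sum_eval (μ : ℝ) (hμ : -(1/2 : ℝ) < μ) (n : ℕ) (hn : 1 ≤ n) :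
    pMu μ (2 * n) 1 (-1) =
      ((2 ^ (2 * n) * μ / (n + μ) *
        ∏ k ∈ Finset.range n, (((k : ℝ) + 1) + μ) / (((k : ℝ) + 1) + 2 * μ) : ℝ) : ℂ) := by
  obtain ⟨m, rfl⟩ : ∃ m, n = m + 1 := ⟨n - 1, by omega⟩
  rw [pMu_two_mul_one_neg_one, sum_neg_one_pow_mul_binomMu hμ,
    two_mul_mul_descPochhammer_div_ascPochhammer_eq_prod hμ]
end

section
/- If -1/2 < μ < 0, then for every nonzero real x one has |exp_μ(ix)| > 1. -/
open Finset

/-!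
Write `f t = expMu μ (I * t)`. The series `E = expMu μ` satisfies the Dunkl eigen-equation
`z E'(z) + μ (E z - E (-z)) = z E z`, and its coefficients are real, so `f (-t) = conj (f t)`.
Together these give `d/dt ‖f t‖² = -(4μ / t) (Im f t)²`, which is `≥ 0` for `t > 0` as `μ < 0`,
so `‖f‖²` is monotone on `[0, ∞)` and starts at `1`. If it stayed `1` on some `[0, x]`, then `Im f`
would vanish on `(0, x)`, hence so would its derivative, which the eigen-equation identifies
with `Re f` there; but `f` cannot vanish where `‖f‖ = 1`.
-/

open Complex ComplexConjugate
open scoped Nat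

section PowerSeries

variable {c : ℕ → ℂ} {C q : ℝ}

lemma summable_norm_mul_pow_of_norm_le (hc : ∀ n, ‖c n‖ ≤ C * q ^ n / n !) (z : ℂ) :
    Summable fun n => ‖c n * z ^ n‖ := by
  refine .of_nonneg_of_le (fun _ => norm_nonneg _) (fun n => ?_)
    ((Real.summable_pow_div_factorial (q * ‖z‖)).mul_left C)
  calc ‖c n * z ^ n‖ = ‖c n‖ * ‖z‖ ^ n := by rw [norm_mul, norm_pow]
    _ ≤ C * q ^ n / n ! * ‖z‖ ^ n := by gcongr; exact hc n
    _ = C * ((q * ‖z‖) ^ n / n !) := by ring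

lemma norm_succ_mul_le (hc : ∀ n, ‖c n‖ ≤ C * q ^ n / n !) (n : ℕ) :
    ‖(n + 1 : ℂ) * c (n + 1)‖ ≤ C * q * q ^ n / n ! := by
  calc ‖(n + 1 : ℂ) * c (n + 1)‖ = (n + 1) * ‖c (n + 1)‖ := by
        rw [norm_mul, ← Nat.cast_succ, norm_natCast, Nat.cast_succ]
    _ ≤ (n + 1) * (C * q ^ (n + 1) / (n + 1)!) := by gcongr; exact hc _
    _ = C * q * q ^ n / n ! := by
        rw [Nat.factorial_succ, Nat.cast_mul, Nat.cast_succ]; field_simp; ring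

lemma hasDerivAt_tsum_mul_pow (hc : ∀ n, ‖c n‖ ≤ C * q ^ n / n !) (z : ℂ) :
    HasDerivAt (fun w => ∑' n, c n * w ^ n) (∑' n, (n + 1) * c (n + 1) * z ^ n) z := by
  set R := ‖z‖ + 1
  have hu : Summable fun n => ‖c n‖ * (n * R ^ (n - 1)) := by
    rw [← summable_nat_add_iff 1]
    refine (summable_norm_mul_pow_of_norm_le (norm_succ_mul_le hc) R).congr fun n => ?_
    rw [norm_mul, norm_mul, norm_pow, norm_real, Real.norm_of_nonneg (by positivity),
      ← Nat.cast_succ, norm_natCast, Nat.add_sub_cancel]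
    ring
  have hderiv (n : ℕ) (w : ℂ) :
      HasDerivAt (fun w => c n * w ^ n) (c n * (n * w ^ (n - 1))) w :=
    (hasDerivAt_pow n w).const_mul (c n)
  have hle (n : ℕ) (w : ℂ) (hw : w ∈ Metric.ball 0 R) :
      ‖c n * (n * w ^ (n - 1))‖ ≤ ‖c n‖ * (n * R ^ (n - 1)) := by
    rw [mem_ball_zero_iff] at hw
    rw [norm_mul, norm_mul, norm_pow, norm_natCast]
    gcongr
  have hz : z ∈ Metric.ball 0 R := by simp [R]
  refine (hasDerivAt_tsum_of_isPreconnected hu Metric.isOpen_ball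
    (convex_ball 0 R).isPreconnected (fun n w _ => hderiv n w) hle hz
    (summable_norm_mul_pow_of_norm_le hc z).of_norm hz).congr_deriv ?_
  rw [(Summable.of_norm_bounded hu fun n => hle n z hz).tsum_eq_zero_add]
  simp only [CharP.cast_eq_zero, zero_mul, mul_zero, zero_add, Nat.cast_succ, Nat.add_sub_cancel]
  exact tsum_congr fun n => by ring

end PowerSeries

lemma HasDerivAt.eq_zero_of_eventuallyEq_const {𝕜 F : Type*} [NontriviallyNormedField 𝕜]
    [NormedAddCommGroup F] [NormedSpace 𝕜 F] {f : 𝕜 → F} {f' c : F} {x : 𝕜}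
    (hf : HasDerivAt f f' x) (h : f =ᶠ[nhds x] fun _ => c) : f' = 0 :=
  (h.hasDerivAt_iff.mp hf).unique (hasDerivAt_const x c)

section GammaMu

variable {μ : ℝ}

lemma gammaMu_factor_pos (hμ₁ : -(1 / 2 : ℝ) < μ) (n : ℕ) :
    0 < (n + 1 : ℝ) + 2 * μ * (if Odd (n + 1) then 1 else 0) := by
  have : (0 : ℝ) ≤ n := n.cast_nonneg
  split_ifs <;> linarith

lemma gammaMu_pos_s15 (hμ₁ : -(1 / 2 : ℝ) < μ) (n : ℕ) : 0 < gammaMu μ n := by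
  induction n with
  | zero => exact one_pos
  | succ n ih => exact mul_pos (gammaMu_factor_pos hμ₁ n) ih

lemma gammaMu_succ_eq (μ : ℝ) (n : ℕ) :
    gammaMu μ (n + 1) = (n + 1 + μ * (1 - (-1) ^ (n + 1))) * gammaMu μ n := by
  rw [gammaMu]
  split_ifs with h
  · rw [h.neg_one_pow]; ring
  · rw [(Nat.not_odd_iff_even.mp h).neg_one_pow]; ring

lemma inv_gammaMu_eq (hμ₁ : -(1 / 2 : ℝ) < μ) (n : ℕ) :
    (gammaMu μ n : ℂ)⁻¹ = (n + 1 + μ * (1 - (-1) ^ (n + 1))) * (gammaMu μ (n + 1) : ℂ)⁻¹ := by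
  have h := gammaMu_succ_eq μ n
  have hne : ((n + 1 + μ * (1 - (-1) ^ (n + 1)) : ℝ) : ℂ) ≠ 0 := by
    have := (gammaMu_pos_s15 hμ₁ (n + 1)).ne'
    rw [h] at this
    exact_mod_cast left_ne_zero_of_mul this
  rw [h]
  push_cast at hne ⊢
  rw [mul_inv, ← mul_assoc, mul_inv_cancel₀ hne, one_mul]

variable (hμ₁ : -(1 / 2 : ℝ) < μ) (hμ₂ : μ ≤ 0)
include hμ₁ hμ₂

lemma pow_mul_factorial_le_gammaMu (n : ℕ) : (1 + 2 * μ) ^ n * n ! ≤ gammaMu μ n := by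
  have h : 0 < 1 + 2 * μ := by linarith
  induction n with
  | zero => simp [gammaMu]
  | succ n ih =>
    have hfactor :
        (1 + 2 * μ) * (n + 1) ≤ (n + 1 : ℝ) + 2 * μ * (if Odd (n + 1) then 1 else 0) := by
      have : (0 : ℝ) ≤ n := n.cast_nonneg
      split_ifs <;> nlinarith
    calc (1 + 2 * μ) ^ (n + 1) * (n + 1)!
        = ((1 + 2 * μ) * (n + 1)) * ((1 + 2 * μ) ^ n * n !) := by
          push_cast [Nat.factorial_succ]; ring
      _ ≤ ((n + 1 : ℝ) + 2 * μ * (if Odd (n + 1) then 1 else 0)) * gammaMu μ n :=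
          mul_le_mul hfactor ih (by positivity) (gammaMu_factor_pos hμ₁ n).le

lemma norm_inv_gammaMu_le (n : ℕ) :
    ‖(gammaMu μ n : ℂ)⁻¹‖ ≤ 1 * (1 + 2 * μ)⁻¹ ^ n / n ! := by
  have h : 0 < 1 + 2 * μ := by linarith
  rw [norm_inv, norm_real, Real.norm_of_nonneg (gammaMu_pos_s15 hμ₁ n).le, one_mul, inv_pow,
    div_eq_mul_inv, ← mul_inv]
  exact inv_anti₀ (by positivity) (pow_mul_factorial_le_gammaMu hμ₁ hμ₂ n)

end GammaMu

section ExpMu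

variable {μ : ℝ}

lemma expMu_eq_tsum (μ : ℝ) : expMu μ = fun z => ∑' n, (gammaMu μ n : ℂ)⁻¹ * z ^ n := by
  ext z
  simp only [expMu, div_eq_inv_mul]

lemma expMu_zero (μ : ℝ) : expMu μ 0 = 1 := by
  rw [expMu, tsum_eq_single 0 fun n hn => by simp [zero_pow hn]]
  simp [gammaMu]

lemma expMu_conj (μ : ℝ) (z : ℂ) : expMu μ (conj z) = conj (expMu μ z) := by
  simp only [expMu, conj_tsum, map_div₀, map_pow, conj_ofReal]

variable (hμ₁ : -(1 / 2 : ℝ) < μ) (hμ₂ : μ ≤ 0)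
include hμ₁ hμ₂

lemma hasSum_expMu (z : ℂ) : HasSum (fun n => (gammaMu μ n : ℂ)⁻¹ * z ^ n) (expMu μ z) := by
  rw [expMu_eq_tsum]
  exact (summable_norm_mul_pow_of_norm_le (norm_inv_gammaMu_le hμ₁ hμ₂) z).of_norm.hasSum

lemma hasDerivAt_expMu (z : ℂ) :
    HasDerivAt (expMu μ) (∑' n, (n + 1) * (gammaMu μ (n + 1) : ℂ)⁻¹ * z ^ n) z := by
  rw [expMu_eq_tsum]
  exact hasDerivAt_tsum_mul_pow (norm_inv_gammaMu_le hμ₁ hμ₂) z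

lemma mul_deriv_expMu (z : ℂ) :
    z * deriv (expMu μ) z = z * expMu μ z - μ * (expMu μ z - expMu μ (-z)) := by
  have hderiv := ((summable_norm_mul_pow_of_norm_le
    (norm_succ_mul_le (norm_inv_gammaMu_le hμ₁ hμ₂)) z).of_norm.hasSum).mul_left z
  have hodd := (hasSum_nat_add_iff' 1).mpr
    (((hasSum_expMu hμ₁ hμ₂ z).sub (hasSum_expMu hμ₁ hμ₂ (-z))).mul_left (μ : ℂ))
  have hterm (n : ℕ) :
      z * ((n + 1) * (gammaMu μ (n + 1) : ℂ)⁻¹ * z ^ n) + μ * ((gammaMu μ (n + 1) : ℂ)⁻¹ *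
        z ^ (n + 1) - (gammaMu μ (n + 1) : ℂ)⁻¹ * (-z) ^ (n + 1)) =
      z * ((gammaMu μ n : ℂ)⁻¹ * z ^ n) := by
    rw [inv_gammaMu_eq hμ₁ n, neg_pow z]
    ring
  have htotal := hderiv.add hodd
  simp only [hterm, Finset.range_one, Finset.sum_singleton, pow_zero, sub_self, mul_zero,
    sub_zero] at htotal
  rw [(hasDerivAt_expMu hμ₁ hμ₂ z).deriv, eq_sub_iff_add_eq]
  exact htotal.unique ((hasSum_expMu hμ₁ hμ₂ z).mul_left z)

end ExpMu

section ImaginaryAxis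

variable {μ : ℝ}

lemma expMu_neg_I_mul (μ : ℝ) (t : ℝ) : expMu μ (-(I * t)) = conj (expMu μ (I * t)) := by
  rw [← expMu_conj]
  simp

variable (hμ₁ : -(1 / 2 : ℝ) < μ) (hμ₂ : μ ≤ 0)
include hμ₁ hμ₂

lemma hasDerivAt_expMu_I_mul (t : ℝ) :
    HasDerivAt (fun s : ℝ => expMu μ (I * s)) (I * deriv (expMu μ) (I * t)) t := by
  have h := (hasDerivAt_expMu hμ₁ hμ₂ (I * t)).differentiableAt.hasDerivAt.comp (t : ℂ)
    ((hasDerivAt_id (t : ℂ)).const_mul I)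
  simpa [mul_comm] using h.comp_ofReal

lemma re_im_deriv_expMu_I_mul (t : ℝ) :
    t * (I * deriv (expMu μ) (I * t)).re = -t * (expMu μ (I * t)).im ∧
      t * (I * deriv (expMu μ) (I * t)).im =
        t * (expMu μ (I * t)).re - 2 * μ * (expMu μ (I * t)).im := by
  have h := mul_deriv_expMu hμ₁ hμ₂ (I * t)
  rw [expMu_neg_I_mul, sub_conj, mul_assoc] at h
  have hre := congrArg re h
  have him := congrArg im h
  simp only [mul_re, mul_im, I_re, I_im, ofReal_re, ofReal_im, sub_re, sub_im] at hre him ⊢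
  constructor <;> linarith

lemma hasDerivAt_norm_sq_expMu_I_mul {t : ℝ} (ht : t ≠ 0) :
    HasDerivAt (fun s : ℝ => ‖expMu μ (I * s)‖ ^ 2)
      (-(4 * μ / t) * (expMu μ (I * t)).im ^ 2) t := by
  refine (hasDerivAt_expMu_I_mul hμ₁ hμ₂ t).norm_sq.congr_deriv ?_
  obtain ⟨hre, him⟩ := re_im_deriv_expMu_I_mul hμ₁ hμ₂ t
  rw [Complex.inner, mul_re, conj_re, conj_im]
  field_simp
  linear_combination (2 * (expMu μ (I * t)).re) * hre + (2 * (expMu μ (I * t)).im) * him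

lemma monotoneOn_norm_sq_expMu_I_mul :
    MonotoneOn (fun s : ℝ => ‖expMu μ (I * s)‖ ^ 2) (Set.Ici 0) := by
  have hF (s : ℝ) := (hasDerivAt_expMu_I_mul hμ₁ hμ₂ s).norm_sq
  refine monotoneOn_of_deriv_nonneg (convex_Ici 0)
    (fun s _ => (hF s).continuousAt.continuousWithinAt)
    (fun s _ => (hF s).differentiableAt.differentiableWithinAt) fun s hs => ?_
  rw [interior_Ici, Set.mem_Ioi] at hs
  rw [(hasDerivAt_norm_sq_expMu_I_mul hμ₁ hμ₂ hs.ne').deriv]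
  have : 0 ≤ -(4 * μ / s) := neg_nonneg.mpr (div_nonpos_of_nonpos_of_nonneg (by linarith) hs.le)
  positivity

lemma expMu_I_mul_eq_zero_of_im_eventuallyEq_zero {t : ℝ} (ht : t ≠ 0)
    (h : (fun s : ℝ => (expMu μ (I * s)).im) =ᶠ[nhds t] fun _ => 0) : expMu μ (I * t) = 0 := by
  have him : (expMu μ (I * t)).im = 0 := h.eq_of_nhds
  have hdim := (imCLM.hasFDerivAt.comp_hasDerivAt t
    (hasDerivAt_expMu_I_mul hμ₁ hμ₂ t)).eq_zero_of_eventuallyEq_const h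
  have hre := (re_im_deriv_expMu_I_mul hμ₁ hμ₂ t).2
  rw [imCLM_apply] at hdim
  rw [hdim, him, mul_zero, mul_zero, sub_zero, eq_comm] at hre
  exact Complex.ext_iff.mpr ⟨(mul_eq_zero.mp hre).resolve_left ht, him⟩

end ImaginaryAxis

lemma one_lt_norm_sq_expMu_I_mul {μ : ℝ} (hμ₁ : -(1 / 2 : ℝ) < μ) (hμ₂ : μ < 0) {x : ℝ}
    (hx : 0 < x) : 1 < ‖expMu μ (I * x)‖ ^ 2 := by
  set F : ℝ → ℝ := fun s => ‖expMu μ (I * s)‖ ^ 2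
  have hmono := monotoneOn_norm_sq_expMu_I_mul hμ₁ hμ₂.le
  have hF0 : F 0 = 1 := by simp [F, expMu_zero]
  by_contra! hle
  have hconst : Set.EqOn F (fun _ => 1) (Set.Ioo 0 x) := fun s hs =>
    le_antisymm ((hmono hs.1.le hx.le hs.2.le).trans hle)
      (hF0 ▸ hmono (Set.mem_Ici.mpr le_rfl) hs.1.le hs.1.le)
  have him : Set.EqOn (fun s : ℝ => (expMu μ (I * s)).im) (fun _ => 0) (Set.Ioo 0 x) :=
    fun s hs => by
      have hd := (hasDerivAt_norm_sq_expMu_I_mul hμ₁ hμ₂.le hs.1.ne').eq_zero_of_eventuallyEq_const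
        (Filter.eventuallyEq_of_mem (Ioo_mem_nhds hs.1 hs.2) hconst)
      have hcoef : -(4 * μ / s) ≠ 0 := neg_ne_zero.mpr (div_ne_zero (by linarith) hs.1.ne')
      exact pow_eq_zero_iff two_ne_zero |>.mp ((mul_eq_zero.mp hd).resolve_left hcoef)
  have hmid : x / 2 ∈ Set.Ioo 0 x := ⟨by linarith, by linarith⟩
  have hzero := expMu_I_mul_eq_zero_of_im_eventuallyEq_zero hμ₁ hμ₂.le hmid.1.ne'
    (Filter.eventuallyEq_of_mem (Ioo_mem_nhds hmid.1 hmid.2) him)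
  have h : F (x / 2) = 1 := hconst hmid
  simp only [F, hzero, norm_zero] at h
  norm_num at h

theorem abs_expMu_gt_one (μ : ℝ) (hμ1 : -(1/2 : ℝ) < μ) (hμ2 : μ < 0) (x : ℝ) (hx : x ≠ 0) :
    1 < ‖expMu μ (Complex.I * x)‖ := by
  have hsq : 1 < ‖expMu μ (I * |x|)‖ ^ 2 := one_lt_norm_sq_expMu_I_mul hμ1 hμ2 (abs_pos.mpr hx)
  have habs : ‖expMu μ (I * |x|)‖ = ‖expMu μ (I * x)‖ := by
    rcases abs_choice x with h | h
    · rw [h]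
    · rw [h, ofReal_neg, mul_neg, expMu_neg_I_mul, norm_conj]
  rw [← habs]
  exact (one_lt_sq_iff₀ (norm_nonneg _)).mp hsq
end
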